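/- arXiv:2202.08422 — 3 statements merged into one kernel-verified Lean document; each statement's English description precedes it below -/
import Mathlib

section
/- (Bihari/Gronwall–Bellman type inequality) Let g, q : [0,∞) → (0,∞) be continuous functions with g(0) < η, and suppose g(t) ≤ g(0) + ∫₀ᵗ q(s) ρ_η(g(s)) ds for all t ≥ 0, where ρ_η(x) = x log(x⁻¹) on (0, η] extended affinely beyond η, with 0 < η < 1/e. Then for all t with g remaining small enough, g(t) ≤ g(0)^{exp(−∫₀ᵗ q(s) ds)}. -/
open Real Set intervalIntegral Filter

/-- Monotonicity of `x ↦ x * log x⁻¹` on `(0, e⁻¹]`. -/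
lemma xlog_mono {a b : ℝ} (ha : 0 < a) (hab : a ≤ b) (hb : b ≤ Real.exp (-1)) :
    a * Real.log a⁻¹ ≤ b * Real.log b⁻¹ := by
  have key : MonotoneOn (fun x : ℝ => -(x * Real.log x)) (Set.Icc a b) := by
    apply monotoneOn_of_deriv_nonneg (convex_Icc a b)
    · exact (Real.continuous_mul_log.neg).continuousOn
    · intro x hx
      rw [interior_Icc] at hx
      have hx0 : 0 < x := ha.trans hx.1
      exact ((Real.hasDerivAt_mul_log hx0.ne').neg).differentiableAt.differentiableWithinAt
    · intro x hx
      rw [interior_Icc] at hx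
      have hx0 : 0 < x := ha.trans hx.1
      rw [HasDerivAt.deriv (f := fun x : ℝ => -(x * Real.log x)) ((Real.hasDerivAt_mul_log hx0.ne').neg)]
      have hlog : Real.log x ≤ -1 := by
        calc Real.log x ≤ Real.log (Real.exp (-1)) :=
              (Real.log_le_log_iff hx0 (Real.exp_pos _)).2 (hx.2.le.trans hb)
          _ = -1 := Real.log_exp _
      linarith
  have := key (Set.left_mem_Icc.2 hab) (Set.right_mem_Icc.2 hab) hab
  simp only [Real.log_inv, mul_neg]
  exact this

/-- The modulus `ρ_η`. -/
noncomputable def rhoEta (η x : ℝ) : ℝ :=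
  if x ≤ η then x * Real.log x⁻¹ else (Real.log η⁻¹ - 1) * x + η

/-- Bihari / Gronwall–Bellman type inequality: if `g, q` are positive continuous on `[0,∞)`,
`g 0 < η`, and `g t ≤ g 0 + ∫₀ᵗ q s * ρ_η (g s) ds` for all `t ≥ 0`, then as long as `g`
stays small enough (i.e. `g ≤ η` on `[0,t]`), `g t ≤ (g 0) ^ exp (−∫₀ᵗ q)`. -/
theorem bihari_inequality (η : ℝ) (hη0 : 0 < η) (hη1 : η < Real.exp (-1))
    (g q : ℝ → ℝ)
    (hgc : ContinuousOn g (Set.Ici 0)) (hqc : ContinuousOn q (Set.Ici 0))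
    (hgpos : ∀ t, 0 ≤ t → 0 < g t) (hqpos : ∀ t, 0 ≤ t → 0 < q t)
    (hg0 : g 0 < η)
    (hineq : ∀ t, 0 ≤ t → g t ≤ g 0 + ∫ s in (0 : ℝ)..t, q s * rhoEta η (g s)) :
    ∀ t, 0 ≤ t → (∀ s ∈ Set.Icc (0 : ℝ) t, g s ≤ η) →
      g t ≤ g 0 ^ Real.exp (-∫ s in (0 : ℝ)..t, q s) := by
  intro t ht hsm
  have he1 : Real.exp (-1) < 1 := by
    rw [Real.exp_lt_one_iff]; norm_num
  have hη_lt1 : η < 1 := hη1.trans he1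
  have hg0pos : 0 < g 0 := hgpos 0 le_rfl
  have hg0lt1 : g 0 < 1 := hg0.trans hη_lt1
  -- extended continuous functions
  set g' : ℝ → ℝ := fun s => g (max s 0) with hg'def
  set q' : ℝ → ℝ := fun s => q (max s 0) with hq'def
  have hg'c : Continuous g' :=
    hgc.comp_continuous (continuous_id.max continuous_const)
      (fun s => Set.mem_Ici.mpr (le_max_right s 0))
  have hq'c : Continuous q' :=
    hqc.comp_continuous (continuous_id.max continuous_const)
      (fun s => Set.mem_Ici.mpr (le_max_right s 0))
  have hg'pos : ∀ s, 0 < g' s := fun s => hgpos _ (le_max_right s 0)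
  have hq'pos : ∀ s, 0 < q' s := fun s => hqpos _ (le_max_right s 0)
  have hg'eq : ∀ s, 0 ≤ s → g' s = g s := fun s hs => by
    simp only [hg'def, max_eq_left hs]
  have hq'eq : ∀ s, 0 ≤ s → q' s = q s := fun s hs => by
    simp only [hq'def, max_eq_left hs]
  set w : ℝ → ℝ := fun s => q' s * (g' s * Real.log (g' s)⁻¹) with hwdef
  have hwc : Continuous w := by
    apply hq'c.mul
    apply hg'c.mul
    exact (hg'c.inv₀ (fun s => (hg'pos s).ne')).log
      (fun s => (inv_pos.mpr (hg'pos s)).ne')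
  set F : ℝ → ℝ := fun s => g 0 + ∫ u in (0 : ℝ)..s, w u with hFdef
  set Q : ℝ → ℝ := fun s => ∫ u in (0 : ℝ)..s, q' u with hQdef
  have hFd : ∀ s, HasDerivAt F (w s) s := fun s =>
    ((hwc.integral_hasStrictDerivAt 0 s).hasDerivAt).const_add (g 0)
  have hQd : ∀ s, HasDerivAt Q (q' s) s := fun s =>
    (hq'c.integral_hasStrictDerivAt 0 s).hasDerivAt
  have hFc : Continuous F := continuous_iff_continuousAt.2 fun s => (hFd s).continuousAt
  have hF0 : F 0 = g 0 := by simp [hFdef]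
  have hQ0 : Q 0 = 0 := by simp [hQdef]
  -- g ≤ F on [0, t]
  have hgleF : ∀ s ∈ Set.Icc (0 : ℝ) t, g s ≤ F s := by
    intro s hs
    have h1 := hineq s hs.1
    have h2 : (∫ u in (0 : ℝ)..s, q u * rhoEta η (g u)) = ∫ u in (0 : ℝ)..s, w u := by
      apply intervalIntegral.integral_congr
      intro u hu
      rw [Set.uIcc_of_le hs.1] at hu
      have hgu : g u ≤ η := hsm u ⟨hu.1, hu.2.trans hs.2⟩
      simp only [hwdef, hg'eq u hu.1, hq'eq u hu.1, rhoEta, if_pos hgu]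
    rw [h2] at h1
    exact h1
  -- lower bound for F on [0, t]
  have hFlb : ∀ s ∈ Set.Icc (0 : ℝ) t, g 0 ≤ F s := by
    intro s hs
    have : 0 ≤ ∫ u in (0 : ℝ)..s, w u := by
      apply intervalIntegral.integral_nonneg hs.1
      intro u hu
      have hgu : g u ≤ η := hsm u ⟨hu.1, hu.2.trans hs.2⟩
      have hgu' : g' u = g u := hg'eq u hu.1
      have hlog : 0 ≤ Real.log (g' u)⁻¹ := by
        apply Real.log_nonneg
        rw [hgu']
        rw [one_le_inv_iff₀]
        exact ⟨hgpos u hu.1, hgu.trans hη_lt1.le⟩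
      exact mul_nonneg (hq'pos u).le (mul_nonneg (hg'pos u).le hlog)
    simp only [hFdef]; linarith
  -- Q is monotone
  have hQmono : ∀ a b : ℝ, a ≤ b → Q a ≤ Q b := by
    intro a b hab
    have hadd : (∫ u in (0:ℝ)..a, q' u) + (∫ u in a..b, q' u) = ∫ u in (0:ℝ)..b, q' u :=
      intervalIntegral.integral_add_adjacent_intervals
        (hq'c.intervalIntegrable 0 a) (hq'c.intervalIntegrable a b)
    have hnn : 0 ≤ ∫ u in a..b, q' u :=
      intervalIntegral.integral_nonneg hab (fun u _ => (hq'pos u).le)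
    simp only [hQdef]
    linarith
  -- the key comparison lemma
  have key : ∀ τ, 0 ≤ τ → τ ≤ t → (∀ s ∈ Set.Icc (0 : ℝ) τ, F s ≤ Real.exp (-1)) →
      F τ ≤ g 0 ^ Real.exp (-Q τ) := by
    intro τ hτ0 hτt hall
    have hFpos : ∀ s ∈ Set.Icc (0 : ℝ) τ, 0 < F s := fun s hs =>
      hg0pos.trans_le (hFlb s ⟨hs.1, hs.2.trans hτt⟩)
    have hFlt1 : ∀ s ∈ Set.Icc (0 : ℝ) τ, F s < 1 := fun s hs => (hall s hs).trans_lt he1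
    have hLpos : ∀ s ∈ Set.Icc (0 : ℝ) τ, 0 < -Real.log (F s) := by
      intro s hs
      have := Real.log_neg (hFpos s hs) (hFlt1 s hs)
      linarith
    have hψmono : MonotoneOn (fun s => Real.log (-Real.log (F s)) + Q s)
        (Set.Icc (0 : ℝ) τ) := by
      apply monotoneOn_of_deriv_nonneg (convex_Icc 0 τ)
      · apply ContinuousOn.add
        · apply ContinuousOn.log
          · exact (hFc.continuousOn.log (fun s hs => (hFpos s hs).ne')).neg
          · exact fun s hs => (hLpos s hs).ne'
        · exact (continuous_iff_continuousAt.2 fun s => (hQd s).continuousAt).continuousOn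
      · intro s hs
        rw [interior_Icc] at hs
        have hsI : s ∈ Set.Icc (0:ℝ) τ := ⟨hs.1.le, hs.2.le⟩
        have h2 : HasDerivAt (fun s => -Real.log (F s)) (-(w s / F s)) s :=
          ((hFd s).log (hFpos s hsI).ne').neg
        have h3 := h2.log (hLpos s hsI).ne'
        exact (h3.add (hQd s)).differentiableAt.differentiableWithinAt
      · intro s hs
        rw [interior_Icc] at hs
        have hsI : s ∈ Set.Icc (0:ℝ) τ := ⟨hs.1.le, hs.2.le⟩
        have hsIt : s ∈ Set.Icc (0:ℝ) t := ⟨hs.1.le, hs.2.le.trans hτt⟩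
        have hFsp : 0 < F s := hFpos s hsI
        have hLp : 0 < -Real.log (F s) := hLpos s hsI
        have h2 : HasDerivAt (fun s => -Real.log (F s)) (-(w s / F s)) s :=
          ((hFd s).log hFsp.ne').neg
        have h3 := h2.log hLp.ne'
        have hψd := h3.add (hQd s)
        rw [HasDerivAt.deriv (f := fun s => Real.log (-Real.log (F s)) + Q s) hψd]
        -- estimate the derivative
        have hgw : g' s = g s := hg'eq s hs.1.le
        have hxlog : g s * Real.log (g s)⁻¹ ≤ F s * Real.log (F s)⁻¹ :=
          xlog_mono (hgpos s hs.1.le) (hgleF s hsIt) (hall s hsI)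
        have hw_le : w s ≤ q' s * (F s * -Real.log (F s)) := by
          simp only [hwdef, hgw]
          rw [← Real.log_inv]
          exact mul_le_mul_of_nonneg_left hxlog (hq'pos s).le
        have hFL : 0 < F s * -Real.log (F s) := mul_pos hFsp hLp
        have hdiv : w s / (F s * -Real.log (F s)) ≤ q' s := (div_le_iff₀ hFL).2 hw_le
        have heq : -(w s / F s) / -Real.log (F s) = -(w s / (F s * -Real.log (F s))) := by
          rw [neg_div, div_div]
        rw [heq]
        linarith
    have hstep := hψmono (Set.left_mem_Icc.2 hτ0) (Set.right_mem_Icc.2 hτ0) hτ0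
    simp only [hF0, hQ0, add_zero] at hstep
    -- now unwind
    have hτI : τ ∈ Set.Icc (0:ℝ) τ := Set.right_mem_Icc.2 hτ0
    have hFτp : 0 < F τ := hFpos τ hτI
    have hL0 : 0 < -Real.log (g 0) := by
      have := Real.log_neg hg0pos hg0lt1; linarith
    have hLτ : 0 < -Real.log (F τ) := hLpos τ hτI
    have hexp1 : -Real.log (g 0) * Real.exp (-Q τ) ≤ -Real.log (F τ) := by
      have h1 : Real.log (-Real.log (g 0)) - Q τ ≤ Real.log (-Real.log (F τ)) := by
        linarith
      calc -Real.log (g 0) * Real.exp (-Q τ)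
          = Real.exp (Real.log (-Real.log (g 0)) - Q τ) := by
            rw [Real.exp_sub, Real.exp_log hL0, Real.exp_neg]; ring
        _ ≤ Real.exp (Real.log (-Real.log (F τ))) := Real.exp_le_exp.2 h1
        _ = -Real.log (F τ) := Real.exp_log hLτ
    have hlogle : Real.log (F τ) ≤ Real.log (g 0 ^ Real.exp (-Q τ)) := by
      rw [Real.log_rpow hg0pos]
      nlinarith [Real.exp_pos (-Q τ)]
    calc F τ = Real.exp (Real.log (F τ)) := (Real.exp_log hFτp).symm
      _ ≤ Real.exp (Real.log (g 0 ^ Real.exp (-Q τ))) := Real.exp_le_exp.2 hlogle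
      _ = g 0 ^ Real.exp (-Q τ) := Real.exp_log (Real.rpow_pos_of_pos hg0pos _)
  -- identify the target integral with Q t
  have hQt_eq : (∫ s in (0 : ℝ)..t, q s) = Q t := by
    simp only [hQdef]
    apply intervalIntegral.integral_congr
    intro u hu
    rw [Set.uIcc_of_le ht] at hu
    exact (hq'eq u hu.1).symm
  by_cases hbig : η ≤ g 0 ^ Real.exp (-∫ s in (0 : ℝ)..t, q s)
  · exact (hsm t ⟨ht, le_rfl⟩).trans hbig
  · push_neg at hbig
    rw [hQt_eq] at hbig
    by_cases hall : ∀ s ∈ Set.Icc (0 : ℝ) t, F s ≤ Real.exp (-1)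
    · have hk := key t ht le_rfl hall
      rw [hQt_eq]
      exact (hgleF t ⟨ht, le_rfl⟩).trans hk
    · exfalso
      push_neg at hall
      obtain ⟨s₀, hs₀, hFs₀⟩ := hall
      set B : Set ℝ := Set.Icc 0 t ∩ {s | Real.exp (-1) ≤ F s} with hBdef
      have hBne : B.Nonempty := ⟨s₀, hs₀, hFs₀.le⟩
      have hBclosed : IsClosed B := isClosed_Icc.inter (isClosed_le continuous_const hFc)
      have hBbdd : BddBelow B := ⟨0, fun x hx => hx.1.1⟩
      set τ := sInf B with hτdef
      have hτB : τ ∈ B := hBclosed.csInf_mem hBne hBbdd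
      obtain ⟨⟨hτ0, hτt⟩, hFτ⟩ := hτB
      have hτpos : 0 < τ := by
        rcases hτ0.lt_or_eq with h | h
        · exact h
        · exfalso
          rw [← h] at hFτ
          have h0 : Real.exp (-1) ≤ F 0 := hFτ
          rw [hF0] at h0
          linarith
      have hlt : ∀ s, 0 ≤ s → s < τ → F s < Real.exp (-1) := by
        intro s hs hsτ
        by_contra hc
        push_neg at hc
        exact absurd (csInf_le hBbdd ⟨⟨hs, hsτ.le.trans hτt⟩, hc⟩) (not_le.2 hsτ)
      have hτle : F τ ≤ Real.exp (-1) := by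
        have htend : Tendsto F (nhdsWithin τ (Set.Iio τ)) (nhds (F τ)) :=
          (hFc.continuousAt.tendsto).mono_left nhdsWithin_le_nhds
        apply le_of_tendsto htend
        have h0 : ∀ᶠ s in nhdsWithin τ (Set.Iio τ), 0 < s :=
          (eventually_gt_nhds hτpos).filter_mono nhdsWithin_le_nhds
        filter_upwards [h0, self_mem_nhdsWithin] with s hs1 hs2
        exact (hlt s hs1.le hs2).le
      have hk := key τ hτ0 hτt (fun s hs =>
        hs.2.lt_or_eq.elim (fun h => (hlt s hs.1 h).le) (fun h => h ▸ hτle))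
      have hmon : g 0 ^ Real.exp (-Q τ) ≤ g 0 ^ Real.exp (-Q t) :=
        Real.rpow_le_rpow_of_exponent_ge hg0pos hg0lt1.le
          (Real.exp_le_exp.2 (by linarith [hQmono τ t hτt]))
      have hFτ' : Real.exp (-1) ≤ F τ := hFτ
      linarith [hk, hmon, hbig, hη1, hFτ']
end

section
/- If g : [0,T] → [0,∞) is continuous and satisfies g(t) ≤ C ∫₀ᵗ ρ_η(g(s)) ds for all t ∈ [0,T] with some constant C > 0, then g ≡ 0 on [0,T]. -/
open Real Set Filter MeasureTheory intervalIntegral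

lemma rhoEta_continuous (η : ℝ) : Continuous (rhoEta η) := by
  unfold rhoEta
  apply Continuous.if_le
  · have : (fun x : ℝ => x * Real.log x⁻¹) = fun x => -(x * Real.log x) := by
      ext x; rw [Real.log_inv]; ring
    rw [this]; exact Real.continuous_mul_log.neg
  · continuity
  · exact continuous_id
  · exact continuous_const
  · intro x hx; rw [hx]; ring

lemma rhoEta_mono (η : ℝ) (hη0 : 0 < η) (hη1 : η < Real.exp (-1)) :
    MonotoneOn (rhoEta η) (Set.Ici 0) := by
  have hlogη : Real.log η < -1 := by
    have := Real.log_lt_log hη0 hη1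
    rwa [Real.log_exp] at this
  have hlog : 1 < Real.log η⁻¹ := by rw [Real.log_inv]; linarith
  have hmono : StrictMonoOn (fun x : ℝ => x * Real.log x⁻¹) (Set.Icc 0 η) := by
    apply strictMonoOn_of_deriv_pos (convex_Icc 0 η)
    · have : (fun x : ℝ => x * Real.log x⁻¹) = fun x => -(x * Real.log x) := by
        ext x; rw [Real.log_inv]; ring
      rw [this]; exact Real.continuous_mul_log.neg.continuousOn
    · intro x hx
      rw [interior_Icc, Set.mem_Ioo] at hx
      have hd : HasDerivAt (fun x : ℝ => x * Real.log x⁻¹) (-(Real.log x + 1)) x := by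
        have h := (Real.hasDerivAt_mul_log (ne_of_gt hx.1)).neg
        have heq : (fun x : ℝ => x * Real.log x⁻¹) = fun x => -(x * Real.log x) := by
          ext y; rw [Real.log_inv]; ring
        rw [heq]; exact h
      rw [hd.deriv]
      have : Real.log x < Real.log η := Real.log_lt_log hx.1 hx.2
      linarith
  intro a ha b hb hab
  simp only [Set.mem_Ici] at ha hb
  unfold rhoEta
  by_cases hbη : b ≤ η
  · have haη : a ≤ η := le_trans hab hbη
    rw [if_pos haη, if_pos hbη]
    exact hmono.monotoneOn ⟨ha, haη⟩ ⟨hb, hbη⟩ hab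
  · push_neg at hbη
    rw [if_neg (not_le.mpr hbη)]
    by_cases haη : a ≤ η
    · rw [if_pos haη]
      have h1 : a * Real.log a⁻¹ ≤ η * Real.log η⁻¹ :=
        hmono.monotoneOn ⟨ha, haη⟩ ⟨le_of_lt hη0, le_refl η⟩ haη
      nlinarith
    · push_neg at haη
      rw [if_neg (not_le.mpr haη)]
      nlinarith

lemma rhoEta_pos (η : ℝ) (hη0 : 0 < η) (hη1 : η < Real.exp (-1)) {x : ℝ}
    (hx0 : 0 < x) (hxη : x ≤ η) : 0 < rhoEta η x := by
  unfold rhoEta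
  rw [if_pos hxη]
  have hη2 : η < 1 := lt_trans hη1 (Real.exp_lt_one_iff.mpr (by norm_num))
  have h1 : x < 1 := lt_of_le_of_lt hxη hη2
  have : 0 < Real.log x⁻¹ := by
    rw [Real.log_inv]
    have := Real.log_neg hx0 h1
    linarith
  positivity

/-- If a nonnegative continuous `g` on `[0,T]` satisfies
`g t ≤ C ∫₀ᵗ ρ_η (g s) ds`, then `g ≡ 0` on `[0,T]`. -/
theorem gronwall_osgood_zero (η : ℝ) (hη0 : 0 < η) (hη1 : η < Real.exp (-1))
    (T C : ℝ) (hT : 0 ≤ T) (hC : 0 < C) (g : ℝ → ℝ)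
    (hgc : ContinuousOn g (Set.Icc 0 T))
    (hgnn : ∀ t ∈ Set.Icc (0 : ℝ) T, 0 ≤ g t)
    (hineq : ∀ t ∈ Set.Icc (0 : ℝ) T, g t ≤ C * ∫ s in (0 : ℝ)..t, rhoEta η (g s)) :
    ∀ t ∈ Set.Icc (0 : ℝ) T, g t = 0 := by
  have hlogη : Real.log η < -1 := by
    have := Real.log_lt_log hη0 hη1
    rwa [Real.log_exp] at this
  have hlog : 1 < Real.log η⁻¹ := by rw [Real.log_inv]; linarith
  set φ : ℝ → ℝ := fun s => rhoEta η (g s) with hφ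
  have hφc : ContinuousOn φ (Set.Icc 0 T) := (rhoEta_continuous η).comp_continuousOn hgc
  set F : ℝ → ℝ := fun t => C * ∫ s in (0:ℝ)..t, φ s with hF
  have hgF : ∀ t ∈ Set.Icc (0:ℝ) T, g t ≤ F t := hineq
  have hFcont : ContinuousOn F (Set.Icc 0 T) := by
    have h1 : IntegrableOn φ (Set.uIcc 0 T) volume := by
      rw [Set.uIcc_of_le hT]
      exact hφc.integrableOn_compact isCompact_Icc
    have h2 := intervalIntegral.continuousOn_primitive_interval h1
    rw [Set.uIcc_of_le hT] at h2
    exact continuousOn_const.mul h2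
  -- the supersolution ψ A
  set ψ : ℝ → ℝ → ℝ := fun A t => Real.exp (-(A * Real.exp (-((C+1)*t)))) with hψ
  have hψpos : ∀ A t, 0 < ψ A t := fun A t => Real.exp_pos _
  have hψd : ∀ A t, HasDerivAt (ψ A)
      (ψ A t * (A * Real.exp (-((C+1)*t)) * (C+1))) t := by
    intro A t
    have h1 : HasDerivAt (fun t : ℝ => -((C+1)*t)) (-(C+1)) t := by
      simpa [Pi.neg_def] using ((hasDerivAt_id t).const_mul (C+1)).neg
    have h2 : HasDerivAt (fun t : ℝ => Real.exp (-((C+1)*t)))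
        (Real.exp (-((C+1)*t)) * (-(C+1))) t := h1.exp
    have h3 : HasDerivAt (fun t : ℝ => -(A * Real.exp (-((C+1)*t))))
        (-(A * (Real.exp (-((C+1)*t)) * (-(C+1))))) t := (h2.const_mul A).neg
    have h4 := h3.exp
    convert h4 using 1
    simp only [hψ]
    ring
  -- A₀
  set A₀ : ℝ := Real.exp ((C+1)*T) * Real.log η⁻¹ with hA₀
  have hA₀pos : 0 < A₀ := mul_pos (Real.exp_pos _) (by linarith)
  have hψη : ∀ A, A₀ ≤ A → ∀ t ∈ Set.Icc (0:ℝ) T, ψ A t ≤ η := by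
    intro A hA t ht
    have hApos : 0 < A := lt_of_lt_of_le hA₀pos hA
    have h1 : Real.exp (-((C+1)*T)) ≤ Real.exp (-((C+1)*t)) := by
      apply Real.exp_le_exp.mpr
      have : (C+1) * t ≤ (C+1) * T := by nlinarith [ht.2]
      linarith
    have h2 : Real.log η⁻¹ ≤ A * Real.exp (-((C+1)*t)) := by
      have h3 : A₀ * Real.exp (-((C+1)*T)) = Real.log η⁻¹ := by
        rw [hA₀, mul_comm (Real.exp ((C+1)*T)), mul_assoc, ← Real.exp_add]
        simp
      calc Real.log η⁻¹ = A₀ * Real.exp (-((C+1)*T)) := h3.symm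
        _ ≤ A * Real.exp (-((C+1)*T)) := by
            apply mul_le_mul_of_nonneg_right hA (le_of_lt (Real.exp_pos _))
        _ ≤ A * Real.exp (-((C+1)*t)) := by
            apply mul_le_mul_of_nonneg_left h1 (le_of_lt hApos)
    calc ψ A t ≤ Real.exp (-(Real.log η⁻¹)) := Real.exp_le_exp.mpr (by linarith)
      _ = η := by rw [Real.log_inv, neg_neg, Real.exp_log hη0]
  have hrhoψ : ∀ A, A₀ ≤ A → ∀ t ∈ Set.Icc (0:ℝ) T,
      rhoEta η (ψ A t) = ψ A t * (A * Real.exp (-((C+1)*t))) := by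
    intro A hA t ht
    unfold rhoEta
    rw [if_pos (hψη A hA t ht)]
    congr 1
    rw [hψ]
    simp only
    rw [← Real.exp_neg, Real.log_exp, neg_neg]
  -- key estimate
  have key : ∀ A, A₀ ≤ A → ∀ t ∈ Set.Icc (0:ℝ) T, F t < ψ A t := by
    intro A hA
    by_contra hcon
    push_neg at hcon
    obtain ⟨t₁, ht₁, ht₁le⟩ := hcon
    set S : Set ℝ := {t | t ∈ Set.Icc (0:ℝ) T ∧ ψ A t ≤ F t} with hS
    have hSne : S.Nonempty := ⟨t₁, ht₁, ht₁le⟩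
    have hSbdd : BddBelow S := ⟨0, fun x hx => hx.1.1⟩
    set t₀ : ℝ := sInf S with ht₀
    have ht₀cl : t₀ ∈ closure S := csInf_mem_closure hSne hSbdd
    have hScc : S ⊆ Set.Icc 0 T := fun x hx => hx.1
    have ht₀Icc : t₀ ∈ Set.Icc (0:ℝ) T :=
      closure_minimal hScc isClosed_Icc ht₀cl
    have hψcont : Continuous (ψ A) := by
      apply Real.continuous_exp.comp
      exact (continuous_const.mul ((continuous_const.mul continuous_id).neg.rexp)).neg
    have hGcont : ContinuousWithinAt (fun t => F t - ψ A t) (Set.Icc 0 T) t₀ :=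
      ((hFcont.sub hψcont.continuousOn) t₀ ht₀Icc)
    have hne : (nhdsWithin t₀ S).NeBot := mem_closure_iff_nhdsWithin_neBot.mp ht₀cl
    have ht₀S : ψ A t₀ ≤ F t₀ := by
      have htend : Tendsto (fun t => F t - ψ A t) (nhdsWithin t₀ S) (nhds (F t₀ - ψ A t₀)) :=
        hGcont.mono hScc
      have hev : ∀ᶠ x in nhdsWithin t₀ S, 0 ≤ F x - ψ A x := by
        filter_upwards [self_mem_nhdsWithin] with x hx
        linarith [hx.2]
      linarith [ge_of_tendsto htend hev]
    have ht₀pos : 0 < t₀ := by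
      rcases lt_or_eq_of_le ht₀Icc.1 with h | h
      · exact h
      · exfalso
        have hF0 : F 0 = 0 := by simp [hF]
        have := hψpos A 0
        rw [← h] at ht₀S
        rw [hF0] at ht₀S
        linarith
    have hbefore : ∀ s ∈ Set.Ico (0:ℝ) t₀, F s < ψ A s := by
      intro s hs
      have hsIcc : s ∈ Set.Icc (0:ℝ) T := ⟨hs.1, le_trans (le_of_lt hs.2) ht₀Icc.2⟩
      by_contra hcon2
      push_neg at hcon2
      have : s ∈ S := ⟨hsIcc, hcon2⟩
      have := csInf_le hSbdd this
      linarith [hs.2]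
    have hEq : F t₀ = ψ A t₀ := by
      have hcl2 : t₀ ∈ closure (Set.Ico 0 t₀) := by
        rw [closure_Ico (ne_of_lt ht₀pos)]
        exact ⟨le_of_lt ht₀pos, le_refl _⟩
      have hne2 : (nhdsWithin t₀ (Set.Ico 0 t₀)).NeBot :=
        mem_closure_iff_nhdsWithin_neBot.mp hcl2
      have hsub : Set.Ico (0:ℝ) t₀ ⊆ Set.Icc 0 T :=
        fun x hx => ⟨hx.1, le_trans (le_of_lt hx.2) ht₀Icc.2⟩
      have htend : Tendsto (fun t => F t - ψ A t) (nhdsWithin t₀ (Set.Ico 0 t₀))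
          (nhds (F t₀ - ψ A t₀)) := hGcont.mono hsub
      have hev : ∀ᶠ x in nhdsWithin t₀ (Set.Ico 0 t₀), F x - ψ A x ≤ 0 := by
        filter_upwards [self_mem_nhdsWithin] with x hx
        linarith [hbefore x hx]
      have := le_of_tendsto htend hev
      linarith
    -- derivative of F at t₀ within Icc 0 t₀
    have hIccsub : Set.Icc (0:ℝ) t₀ ⊆ Set.Icc 0 T :=
      Set.Icc_subset_Icc le_rfl ht₀Icc.2
    have hint : IntervalIntegrable φ volume 0 t₀ := by
      apply (hφc.mono _).intervalIntegrable
      rw [Set.uIcc_of_le ht₀Icc.1]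
      exact hIccsub
    have hmeas : StronglyMeasurableAtFilter φ (nhdsWithin t₀ (Set.Iic t₀)) volume := by
      refine ⟨Set.Icc 0 t₀, ?_, (hφc.mono hIccsub).aestronglyMeasurable measurableSet_Icc⟩
      rw [← nhdsWithin_Icc_eq_nhdsLE ht₀pos]
      exact self_mem_nhdsWithin
    have hcwa : ContinuousWithinAt φ (Set.Iic t₀) t₀ := by
      have h1 : ContinuousWithinAt φ (Set.Icc 0 t₀) t₀ :=
        (hφc.mono hIccsub) t₀ ⟨le_of_lt ht₀pos, le_refl _⟩
      rwa [ContinuousWithinAt, nhdsWithin_Icc_eq_nhdsLE ht₀pos] at h1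
    have hFd0 : HasDerivWithinAt (fun u => ∫ s in (0:ℝ)..u, φ s) (φ t₀) (Set.Iic t₀) t₀ :=
      intervalIntegral.integral_hasDerivWithinAt_right hint hmeas hcwa
    have hFd : HasDerivWithinAt F (C * φ t₀) (Set.Icc 0 t₀) t₀ :=
      ((hFd0.mono Set.Icc_subset_Iic_self).const_mul C)
    -- derivative of ψ
    have hψd2 : HasDerivWithinAt (ψ A) ((C+1) * rhoEta η (ψ A t₀)) (Set.Icc 0 t₀) t₀ := by
      have h1 := (hψd A t₀).hasDerivWithinAt (s := Set.Icc 0 t₀)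
      have h2 : ψ A t₀ * (A * Real.exp (-((C+1)*t₀)) * (C+1))
          = (C+1) * rhoEta η (ψ A t₀) := by
        rw [hrhoψ A hA t₀ ht₀Icc]; ring
      rwa [h2] at h1
    set d : ℝ := (C+1) * rhoEta η (ψ A t₀) - C * φ t₀ with hd
    have hhd : HasDerivWithinAt (fun t => ψ A t - F t) d (Set.Icc 0 t₀) t₀ := hψd2.sub hFd
    have hdpos : 0 < d := by
      have h1 : φ t₀ ≤ rhoEta η (ψ A t₀) := by
        apply rhoEta_mono η hη0 hη1 (hgnn t₀ ht₀Icc) (le_of_lt (hψpos A t₀))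
        calc g t₀ ≤ F t₀ := hgF t₀ ht₀Icc
          _ = ψ A t₀ := hEq
      have h2 : 0 < rhoEta η (ψ A t₀) :=
        rhoEta_pos η hη0 hη1 (hψpos A t₀) (hψη A hA t₀ ht₀Icc)
      rw [hd]; nlinarith
    have hdle : d ≤ 0 := by
      rw [hasDerivWithinAt_iff_tendsto_slope] at hhd
      have hdiff : Set.Icc (0:ℝ) t₀ \ {t₀} = Set.Ico 0 t₀ := Set.Icc_sdiff_right
      rw [hdiff] at hhd
      have hcl2 : t₀ ∈ closure (Set.Ico 0 t₀) := by
        rw [closure_Ico (ne_of_lt ht₀pos)]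
        exact ⟨le_of_lt ht₀pos, le_refl _⟩
      have hne2 : (nhdsWithin t₀ (Set.Ico 0 t₀)).NeBot :=
        mem_closure_iff_nhdsWithin_neBot.mp hcl2
      apply le_of_tendsto hhd
      filter_upwards [self_mem_nhdsWithin] with x hx
      have h1 : 0 < ψ A x - F x := by linarith [hbefore x hx]
      have h2 : x - t₀ < 0 := by linarith [hx.2]
      have : slope (fun t => ψ A t - F t) t₀ x
          = ((ψ A x - F x) - (ψ A t₀ - F t₀)) / (x - t₀) := by
        rw [slope_def_field]
      rw [this, hEq]
      have h3 : (ψ A x - F x) - (ψ A t₀ - ψ A t₀) > 0 := by linarith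
      exact le_of_lt (div_neg_of_pos_of_neg (by linarith) h2)
    linarith
  -- conclusion
  intro t ht
  have hc : 0 < Real.exp (-((C+1)*t)) := Real.exp_pos _
  have htend : Tendsto (fun A => ψ A t) atTop (nhds 0) := by
    apply Real.tendsto_exp_atBot.comp
    apply Filter.tendsto_neg_atTop_atBot.comp
    exact Tendsto.atTop_mul_const hc tendsto_id
  have hev : ∀ᶠ A in atTop, g t ≤ ψ A t := by
    filter_upwards [eventually_ge_atTop A₀] with A hA
    exact le_of_lt (lt_of_le_of_lt (hgF t ht) (key A hA t ht))
  have h1 : g t ≤ 0 := ge_of_tendsto htend hev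
  exact le_antisymm h1 (hgnn t ht)
end

section
/- Let γ : (0,∞) → (0,∞) be continuous, bounded on [1,∞), with limsup_{x→0⁺} γ(x)/log(x⁻¹) < ∞. Then there exist 0 < η < 1/e and a constant C ≥ 1 such that x²·γ(x) ≤ C·ρ_η(x²) for all x ∈ (0,∞). -/
/-- If `γ` is positive and continuous on `(0,∞)`, bounded on `[1,∞)`, and
`limsup_{x→0⁺} γ(x)/log(x⁻¹) < ∞`, then there are `0 < η < 1/e` and `C ≥ 1`
with `x² * γ x ≤ C * ρ_η (x²)` for all `x > 0`. -/
theorem sq_mul_gamma_le_rhoEta_sq (γ : ℝ → ℝ)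
    (hγc : ContinuousOn γ (Set.Ioi 0))
    (hγpos : ∀ x, 0 < x → 0 < γ x)
    (hγbdd : ∃ B : ℝ, ∀ x, 1 ≤ x → γ x ≤ B)
    (hbd : Filter.IsBoundedUnder (· ≤ ·) (nhdsWithin 0 (Set.Ioi 0))
      (fun x => γ x / Real.log x⁻¹)) :
    ∃ η C : ℝ, 0 < η ∧ η < Real.exp (-1) ∧ 1 ≤ C ∧
      ∀ x, 0 < x → x ^ 2 * γ x ≤ C * rhoEta η (x ^ 2) := by
  obtain ⟨B, hB⟩ := hγbdd
  obtain ⟨M, hM⟩ := hbd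
  rw [Filter.eventually_map] at hM
  obtain ⟨δ, hδ, hsub⟩ := mem_nhdsGT_iff_exists_Ioo_subset.mp hM
  rw [Set.mem_Ioi] at hδ
  set a := min δ (Real.exp (-1)) with ha_def
  have ha0 : 0 < a := lt_min hδ (Real.exp_pos _)
  have hae : a ≤ Real.exp (-1) := min_le_right _ _
  have he1 : Real.exp (-1) < 1 := by
    rw [Real.exp_lt_one_iff]; norm_num
  obtain ⟨K, hK⟩ := (isCompact_Icc (a := a) (b := 1)).exists_bound_of_continuousOn
    (hγc.mono (fun x hx => lt_of_lt_of_le ha0 hx.1))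
  have hK0 : 0 ≤ K := le_trans (norm_nonneg _) (hK a ⟨le_refl _, le_of_lt (lt_of_le_of_lt hae he1)⟩)
  refine ⟨Real.exp (-2), max 1 (max (max M K) B), Real.exp_pos _,
    Real.exp_lt_exp.mpr (by norm_num), le_max_left _ _, ?_⟩
  set C := max 1 (max (max M K) B) with hC_def
  have hMC : M ≤ C := le_trans (le_trans (le_max_left _ _) (le_max_left _ _)) (le_max_right _ _)
  have hKC : K ≤ C := le_trans (le_trans (le_max_right _ _) (le_max_left _ _)) (le_max_right _ _)
  have hBC : B ≤ C := le_trans (le_max_right _ _) (le_max_right _ _)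
  have hC1 : (1:ℝ) ≤ C := le_max_left _ _
  have hC0 : (0:ℝ) ≤ C := by linarith
  have hlog2 : Real.log (Real.exp (-2))⁻¹ = 2 := by
    rw [← Real.exp_neg, Real.log_exp]; norm_num
  have h2 : Real.exp (-2) = Real.exp (-1) ^ 2 := by
    rw [sq, ← Real.exp_add]; norm_num
  intro x hx
  by_cases hxe : x ^ 2 ≤ Real.exp (-2)
  · -- small x : x ≤ exp(-1)
    have hx1 : x ≤ Real.exp (-1) := by
      nlinarith [Real.exp_pos (-1), sq_nonneg (x - Real.exp (-1))]
    have hlx : Real.log x ≤ -1 := (Real.log_le_iff_le_exp hx).mpr hx1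
    have hlog1 : 1 ≤ Real.log x⁻¹ := by rw [Real.log_inv]; linarith
    have hγle : γ x ≤ C * Real.log x⁻¹ := by
      by_cases hxa : x < a
      · have hxδ : x ∈ Set.Ioo 0 δ := ⟨hx, lt_of_lt_of_le hxa (min_le_left _ _)⟩
        have h1 := hsub hxδ
        have hlpos : 0 < Real.log x⁻¹ := by linarith
        have : γ x ≤ M * Real.log x⁻¹ := (div_le_iff₀ hlpos).mp h1
        nlinarith
      · push_neg at hxa
        have hxI : x ∈ Set.Icc a 1 := ⟨hxa, le_trans hx1 he1.le⟩
        have h1 : γ x ≤ K := le_trans (le_abs_self _) (hK x hxI)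
        nlinarith
    rw [rhoEta, if_pos hxe]
    have hlogsq : Real.log ((x ^ 2)⁻¹) = 2 * Real.log x⁻¹ := by
      rw [Real.log_inv, Real.log_inv, Real.log_pow]; push_cast; ring
    rw [hlogsq]
    nlinarith [sq_nonneg x, mul_nonneg hC0 (by linarith : (0:ℝ) ≤ Real.log x⁻¹),
      mul_le_mul_of_nonneg_left hγle (sq_nonneg x)]
  · -- large x : x > exp(-1)
    push_neg at hxe
    have hx1 : Real.exp (-1) < x := by
      nlinarith [Real.exp_pos (-1), sq_nonneg (x - Real.exp (-1))]
    have hγle : γ x ≤ C := by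
      by_cases hx2 : x ≤ 1
      · have hxI : x ∈ Set.Icc a 1 := ⟨le_of_lt (lt_of_le_of_lt hae hx1), hx2⟩
        exact le_trans (le_trans (le_abs_self _) (hK x hxI)) hKC
      · exact le_trans (hB x (le_of_not_ge hx2)) hBC
    rw [rhoEta, if_neg (not_le.mpr hxe)]
    rw [hlog2]
    nlinarith [sq_nonneg x, Real.exp_pos (-2),
      mul_le_mul_of_nonneg_left hγle (sq_nonneg x)]
end
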